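/- Assume W is singular (0 is an eigenvalue of W) and that for every complex eigenvalue λ of W the matrix E_λ = e^{Ah} + λ·𝓗(h) is invertible. If the networked sampled-data system (Φ_s, Ψ_s) is controllable, then the pair (e^{Ah}, 𝓑(h)) satisfies the PBH condition. -/

import Mathlib

open Matrix
open scoped Kronecker

/-- Entrywise complexification of a real matrix. -/
noncomputable def cpx {a b : Type*} (M : Matrix a b ℝ) : Matrix a b ℂ :=
  M.map (Complex.ofReal)

/-- The matrix exponential `e^{M}`. -/
noncomputable def mexp {q : Type*} [Fintype q] [DecidableEq q]
    (M : Matrix q q ℝ) : Matrix q q ℝ :=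
  NormedSpace.exp M

/-- The entrywise integral `∫₀ʰ e^{Aτ} dτ`. -/
noncomputable def intExp {q : Type*} [Fintype q] [DecidableEq q]
    (A : Matrix q q ℝ) (h : ℝ) : Matrix q q ℝ :=
  Matrix.of fun i j => ∫ τ in (0:ℝ)..h, (NormedSpace.exp (τ • A)) i j

/-- `θ` is an eigenvalue of the complex square matrix `M`. -/
def IsEig {q : Type*} [Fintype q] [DecidableEq q] (M : Matrix q q ℂ) (θ : ℂ) : Prop :=
  (θ • (1 : Matrix q q ℂ) - M).det = 0

/-- PBH condition for a pair of complex matrices: for every `s ∈ ℂ`, the only row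
vector `v` with `v (sI - M) = 0` and `v G = 0` is `v = 0`. -/
def PBH {q r : Type*} [Fintype q] [DecidableEq q] [Fintype r]
    (M : Matrix q q ℂ) (G : Matrix q r ℂ) : Prop :=
  ∀ (s : ℂ) (v : q → ℂ), v ᵥ* (s • (1 : Matrix q q ℂ) - M) = 0 → v ᵥ* G = 0 → v = 0

/-- Controllability of a discrete-time linear system `x⁺ = F x + G u`:
every state can be steered to the origin in finitely many steps. -/
def Controllable {q r : Type*} [Fintype q] [DecidableEq q] [Fintype r]
    (F : Matrix q q ℝ) (G : Matrix q r ℝ) : Prop :=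
  ∀ x : q → ℝ, ∃ (k : ℕ) (u : Fin k → r → ℝ),
    (F ^ k) *ᵥ x + ∑ j : Fin k, (F ^ (k - 1 - (j : ℕ))) *ᵥ (G *ᵥ u j) = 0

/-- `𝓑(h) = (∫₀ʰ e^{Aτ} dτ)·B`. -/
noncomputable def sampB {n p : ℕ} (A : Matrix (Fin n) (Fin n) ℝ)
    (B : Matrix (Fin n) (Fin p) ℝ) (h : ℝ) : Matrix (Fin n) (Fin p) ℝ :=
  intExp A h * B

/-- `𝓗(h) = (∫₀ʰ e^{Aτ} dτ)·H·C`. -/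
noncomputable def sampH {n m : ℕ} (A : Matrix (Fin n) (Fin n) ℝ)
    (H : Matrix (Fin n) (Fin m) ℝ) (C : Matrix (Fin m) (Fin n) ℝ) (h : ℝ) :
    Matrix (Fin n) (Fin n) ℝ :=
  intExp A h * H * C

/-- `Φ_s = I_N ⊗ e^{Ah} + W ⊗ 𝓗(h)`. -/
noncomputable def Phis {n m N : ℕ} (A : Matrix (Fin n) (Fin n) ℝ)
    (H : Matrix (Fin n) (Fin m) ℝ) (C : Matrix (Fin m) (Fin n) ℝ)
    (W : Matrix (Fin N) (Fin N) ℝ) (h : ℝ) :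
    Matrix (Fin N × Fin n) (Fin N × Fin n) ℝ :=
  (1 : Matrix (Fin N) (Fin N) ℝ) ⊗ₖ mexp (h • A) + W ⊗ₖ sampH A H C h

/-- `E_λ = e^{Ah} + λ·𝓗(h)` (complexified). -/
noncomputable def Emat {n m : ℕ} (A : Matrix (Fin n) (Fin n) ℝ)
    (H : Matrix (Fin n) (Fin m) ℝ) (C : Matrix (Fin m) (Fin n) ℝ)
    (h : ℝ) (lam : ℂ) : Matrix (Fin n) (Fin n) ℂ :=
  cpx (mexp (h • A)) + lam • cpx (sampH A H C h)


/-!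
Let `v` be a left eigenvector of `e^{Ah}` for `s` with `v 𝓑(h) = 0`. Since `e^{Ah}` is invertible,
`s ≠ 0`. Singularity of `W` gives a nonzero `w` with `w W = 0`; then `w ⊗ v` is a left
eigenvector of `Φ_s` for `s` annihilating `Ψ_s`. Pairing it with the controllability identity
`Φ_s^k x + Σ Φ_s^{k-1-j} Ψ_s u_j = 0` gives `s^k ⟪w ⊗ v, x⟫ = 0` for every real `x`, so
`w ⊗ v = 0` and hence `v = 0`.
-/

section Complexification

variable {q r : Type*}

lemma cpx_pow [Fintype q] [DecidableEq q] (M : Matrix q q ℝ) (k : ℕ) :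
    cpx (M ^ k) = cpx M ^ k :=
  map_pow Complex.ofRealHom.mapMatrix M k

lemma cpx_add (M P : Matrix q r ℝ) : cpx (M + P) = cpx M + cpx P :=
  Matrix.map_add _ Complex.ofReal_add M P

lemma cpx_one [DecidableEq q] : cpx (1 : Matrix q q ℝ) = 1 :=
  Matrix.map_one _ Complex.ofReal_zero Complex.ofReal_one

lemma isUnit_cpx [Fintype q] [DecidableEq q] {M : Matrix q q ℝ} (hM : IsUnit M) :
    IsUnit (cpx M) :=
  hM.map Complex.ofRealHom.mapMatrix

lemma cpx_kronecker {q' r' : Type*} (M : Matrix q r ℝ) (P : Matrix q' r' ℝ) :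
    cpx (M ⊗ₖ P) = cpx M ⊗ₖ cpx P := by
  ext; simp [cpx, kroneckerMap_apply]

lemma cpx_mulVec [Fintype r] (M : Matrix q r ℝ) (y : r → ℝ) :
    Complex.ofRealHom.compLeft q (M *ᵥ y) = cpx M *ᵥ Complex.ofRealHom.compLeft r y :=
  funext (RingHom.map_mulVec Complex.ofRealHom M y)

end Complexification

lemma isEig_zero_iff {q : Type*} [Fintype q] [DecidableEq q] {M : Matrix q q ℂ} :
    IsEig M 0 ↔ M.det = 0 := by
  simp [IsEig, det_neg]

lemma vecMul_smul_one_sub_eq_zero_iff {R q : Type*} [CommRing R] [Fintype q] [DecidableEq q]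
    {M : Matrix q q R} {s : R} {v : q → R} :
    v ᵥ* (s • (1 : Matrix q q R) - M) = 0 ↔ v ᵥ* M = s • v := by
  rw [vecMul_sub, vecMul_smul, vecMul_one, sub_eq_zero, eq_comm]

lemma vecMul_pow_of_vecMul_eq_smul {R q : Type*} [CommSemiring R] [Fintype q] [DecidableEq q]
    {M : Matrix q q R} {s : R} {v : q → R} (hv : v ᵥ* M = s • v) (k : ℕ) :
    v ᵥ* M ^ k = s ^ k • v := by
  induction k with
  | zero => simp
  | succ k ih => rw [pow_succ, ← vecMul_vecMul, ih, smul_vecMul, hv, smul_smul, pow_succ]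

/-- `vec (vecMulVec v w)` is the Kronecker product `w ⊗ v` of the two row vectors. -/
lemma vec_vecMulVec_vecMul_kronecker {R l m n p : Type*} [CommSemiring R] [Fintype m] [Fintype n]
    (v : n → R) (w : m → R) (M : Matrix m l R) (P : Matrix n p R) :
    vec (vecMulVec v w) ᵥ* (M ⊗ₖ P) = vec (vecMulVec (v ᵥ* P) (w ᵥ* M)) := by
  rw [vec_vecMul_kronecker, mul_vecMulVec, vecMulVec_mul, mulVec_transpose]

theorem Controllable.eq_zero_of_vecMul_eq_smul {q r : Type*} [Fintype q] [DecidableEq q]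
    [Fintype r] {F : Matrix q q ℝ} {G : Matrix q r ℝ} (hc : Controllable F G) {s : ℂ}
    (hs : s ≠ 0) {x : q → ℂ} (hF : x ᵥ* cpx F = s • x) (hG : x ᵥ* cpx G = 0) : x = 0 := by
  have pairing_pow : ∀ k y, x ⬝ᵥ Complex.ofRealHom.compLeft q (F ^ k *ᵥ y) =
      s ^ k * (x ⬝ᵥ Complex.ofRealHom.compLeft q y) := by
    intro k y
    rw [cpx_mulVec, dotProduct_mulVec, cpx_pow, vecMul_pow_of_vecMul_eq_smul hF,
      smul_dotProduct, smul_eq_mul]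
  have pairing_input : ∀ u, x ⬝ᵥ Complex.ofRealHom.compLeft q (G *ᵥ u) = 0 := by
    intro u
    rw [cpx_mulVec, dotProduct_mulVec, hG, zero_dotProduct]
  have orth : ∀ y, x ⬝ᵥ Complex.ofRealHom.compLeft q y = 0 := by
    intro y
    obtain ⟨k, u, hu⟩ := hc y
    have h := congrArg (fun z => x ⬝ᵥ Complex.ofRealHom.compLeft q z) hu
    simp only [map_add, map_sum, map_zero, dotProduct_add, dotProduct_sum, dotProduct_zero,
      pairing_pow, pairing_input, mul_zero, Finset.sum_const_zero, add_zero] at h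
    exact (mul_eq_zero.mp h).resolve_left (pow_ne_zero k hs)
  funext i
  simpa [dotProduct, Pi.single_apply] using orth (Pi.single i 1)

lemma vec_vecMulVec_vecMul_cpx_Phis {n m N : ℕ} {A : Matrix (Fin n) (Fin n) ℝ}
    {H : Matrix (Fin n) (Fin m) ℝ} {C : Matrix (Fin m) (Fin n) ℝ}
    {W : Matrix (Fin N) (Fin N) ℝ} {h : ℝ} {s : ℂ} {v : Fin n → ℂ} {w : Fin N → ℂ}
    (hv : v ᵥ* cpx (mexp (h • A)) = s • v) (hw : w ᵥ* cpx W = 0) :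
    vec (vecMulVec v w) ᵥ* cpx (Phis A H C W h) = s • vec (vecMulVec v w) := by
  rw [Phis, cpx_add, cpx_kronecker, cpx_kronecker, cpx_one, vecMul_add,
    vec_vecMulVec_vecMul_kronecker, vec_vecMulVec_vecMul_kronecker, vecMul_one, hv, hw]
  ext
  simp [vecMulVec_apply]

theorem stmt7_general
    (n m p N : ℕ)
    (h : ℝ)
    (A : Matrix (Fin n) (Fin n) ℝ) (B : Matrix (Fin n) (Fin p) ℝ)
    (C : Matrix (Fin m) (Fin n) ℝ) (H : Matrix (Fin n) (Fin m) ℝ)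
    (W : Matrix (Fin N) (Fin N) ℝ)
    (δ : Fin N → ℝ)
    (hsing : IsEig (cpx W) 0)
    (hc : Controllable (Phis A H C W h) (Matrix.diagonal δ ⊗ₖ sampB A B h)) :
    PBH (cpx (mexp (h • A))) (cpx (sampB A B h)) := by
  intro s v hv hvB
  rw [vecMul_smul_one_sub_eq_zero_iff] at hv
  rcases eq_or_ne s 0 with rfl | hs
  · have hunit : IsUnit (cpx (mexp (h • A))) := isUnit_cpx (Matrix.isUnit_exp _)
    exact vecMul_injective_of_isUnit hunit
      (show v ᵥ* _ = 0 ᵥ* _ by rw [hv, zero_smul, zero_vecMul])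
  obtain ⟨w, hw0, hwW⟩ := exists_vecMul_eq_zero_iff.mpr (isEig_zero_iff.mp hsing)
  have hx := hc.eq_zero_of_vecMul_eq_smul hs (vec_vecMulVec_vecMul_cpx_Phis hv hwW) (by
    rw [cpx_kronecker, vec_vecMulVec_vecMul_kronecker, hvB, zero_vecMulVec, vec_zero])
  rw [← vec_zero, vec_inj] at hx
  obtain ⟨i, hi⟩ := Function.ne_iff.mp hw0
  funext j
  exact (mul_eq_zero.mp (congrFun₂ hx j i)).resolve_right hi

theorem stmt7
    (n m p N : ℕ) (hn : 0 < n) (hm : 0 < m) (hp : 0 < p) (hN : 0 < N)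
    (h : ℝ) (hh : 0 < h)
    (A : Matrix (Fin n) (Fin n) ℝ) (B : Matrix (Fin n) (Fin p) ℝ)
    (C : Matrix (Fin m) (Fin n) ℝ) (H : Matrix (Fin n) (Fin m) ℝ)
    (W : Matrix (Fin N) (Fin N) ℝ)
    (δ : Fin N → ℝ) (hδ : ∀ i, δ i = 0 ∨ δ i = 1)
    (hsing : IsEig (cpx W) 0)
    (hE : ∀ lam : ℂ, IsEig (cpx W) lam → IsUnit (Emat A H C h lam))
    (hc : Controllable (Phis A H C W h) (Matrix.diagonal δ ⊗ₖ sampB A B h)) :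
    PBH (cpx (mexp (h • A))) (cpx (sampB A B h)) :=
  stmt7_general n m p N h A B C H W δ hsing hc
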